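/- Let f be an integral feasible flow in the value network N(C) of a costgcc constraint. Then the assignment τ mapping each variable x to the unique value b with f_{bx} = 1 satisfies: for every value a_i, the number of variables assigned a_i lies in [l_i, u_i], and Σ_x cost(x, τ(x)) = cost(f). Consequently C is consistent if and only if the minimum cost of a feasible flow in N(C) is at most H. -/
import Mathlib

open Finset

lemma costgcc_aux
    {A X : Type*} [Fintype A] [Fintype X] [DecidableEq A]
    (lb ub : A → ℤ) (cost : X → A → ℝ)
    (f : A → X → ℤ)
    (hbound : ∀ a x, 0 ≤ f a x ∧ f a x ≤ 1)
    (hvar : ∀ x, ∑ a, f a x = 1)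
    (hval : ∀ a, lb a ≤ ∑ x, f a x ∧ ∑ x, f a x ≤ ub a)
    (τ : X → A) (hτ : ∀ x, f (τ x) x = 1) :
    (∀ a, lb a ≤ ((Finset.univ.filter fun x => τ x = a).card : ℤ) ∧
        ((Finset.univ.filter fun x => τ x = a).card : ℤ) ≤ ub a) ∧
      ∑ x, cost x (τ x) = ∑ a, ∑ x, (f a x : ℝ) * cost x a := by
  have hf : ∀ a x, f a x = if τ x = a then 1 else 0 := by
    intro a x
    by_cases h : τ x = a
    · subst h; simp [hτ x]
    · simp only [h, if_false]
      have hadd : f (τ x) x + ∑ b ∈ (univ : Finset A).erase (τ x), f b x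
          = ∑ b, f b x :=
        Finset.add_sum_erase (univ : Finset A) (fun b => f b x)
          (Finset.mem_univ (τ x))
      have h1 : ∑ b ∈ (univ : Finset A).erase (τ x), f b x = 0 := by
        rw [hvar x, hτ x] at hadd; omega
      exact (Finset.sum_eq_zero_iff_of_nonneg
        (fun b _ => (hbound b x).1)).1 h1 a
        (Finset.mem_erase.2 ⟨fun hc => h hc.symm, Finset.mem_univ a⟩)
  have hcard : ∀ a, ∑ x, f a x
      = ((Finset.univ.filter fun x => τ x = a).card : ℤ) := by
    intro a
    rw [Finset.card_filter]
    push_cast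
    exact Finset.sum_congr rfl fun x _ => by rw [hf a x]
  constructor
  · intro a
    have := hval a
    rw [hcard a] at this
    exact this
  · rw [Finset.sum_comm]
    refine Finset.sum_congr rfl fun x _ => ?_
    have : ∀ a, ((f a x : ℝ)) * cost x a
        = if τ x = a then cost x a else 0 := by
      intro a; rw [hf a x]; by_cases h : τ x = a <;> simp [h]
    simp only [this]
    simp
lemma costgcc_choice
    {A X : Type*} [Fintype A] [Fintype X] [DecidableEq A]
    (g : A → X → ℤ)
    (hbound : ∀ a x, 0 ≤ g a x ∧ g a x ≤ 1)
    (hvar : ∀ x, ∑ a, g a x = 1) (x : X) :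
    ∃ a, g a x = 1 := by
  by_contra hc
  push_neg at hc
  have : ∀ a, g a x = 0 := fun a => by
    have h1 := (hbound a x).1
    have h2 := (hbound a x).2
    have := hc a
    omega
  have hs := hvar x
  simp only [this, Finset.sum_const_zero] at hs
  exact absurd hs (by norm_num)

theorem costgcc_flow_correspondence
    {A X : Type*} [Fintype A] [Fintype X] [DecidableEq A]
    (lb ub : A → ℤ) (cost : X → A → ℝ) (H : ℝ)
    (f : A → X → ℤ)
    (hbound : ∀ a x, 0 ≤ f a x ∧ f a x ≤ 1)
    (hvar : ∀ x, ∑ a, f a x = 1)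
    (hval : ∀ a, lb a ≤ ∑ x, f a x ∧ ∑ x, f a x ≤ ub a)
    (τ : X → A) (hτ : ∀ x, f (τ x) x = 1) :
    ((∀ a, lb a ≤ ((Finset.univ.filter fun x => τ x = a).card : ℤ) ∧
        ((Finset.univ.filter fun x => τ x = a).card : ℤ) ≤ ub a) ∧
      ∑ x, cost x (τ x) = ∑ a, ∑ x, (f a x : ℝ) * cost x a) ∧
    ((∃ σ : X → A,
        (∀ a, lb a ≤ ((Finset.univ.filter fun x => σ x = a).card : ℤ) ∧
          ((Finset.univ.filter fun x => σ x = a).card : ℤ) ≤ ub a) ∧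
        ∑ x, cost x (σ x) ≤ H) ↔
      (∃ g : A → X → ℤ,
        (∀ a x, 0 ≤ g a x ∧ g a x ≤ 1) ∧
        (∀ x, ∑ a, g a x = 1) ∧
        (∀ a, lb a ≤ ∑ x, g a x ∧ ∑ x, g a x ≤ ub a) ∧
        ∑ a, ∑ x, (g a x : ℝ) * cost x a ≤ H)) := by
  refine ⟨costgcc_aux lb ub cost f hbound hvar hval τ hτ, ?_, ?_⟩
  · rintro ⟨σ, hσb, hσc⟩
    refine ⟨fun a x => if σ x = a then 1 else 0, ?_, ?_, ?_, ?_⟩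
    · intro a x; by_cases h : σ x = a <;> simp [h]
    · intro x; simp
    · intro a
      have : ∑ x, (if σ x = a then (1:ℤ) else 0)
          = ((Finset.univ.filter fun x => σ x = a).card : ℤ) := by
        rw [Finset.card_filter]; push_cast; rfl
      rw [this]; exact hσb a
    · have heq : ∑ a, ∑ x, (if σ x = a then (1:ℝ) else 0) * cost x a
          = ∑ x, cost x (σ x) := by
        rw [Finset.sum_comm]
        refine Finset.sum_congr rfl fun x _ => ?_
        have : ∀ a, (if σ x = a then (1:ℝ) else 0) * cost x a
            = if σ x = a then cost x a else 0 := by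
          intro a; by_cases h : σ x = a <;> simp [h]
        simp only [this]
        simp
      simp only [Int.cast_ite, Int.cast_one, Int.cast_zero]
      rw [heq]; exact hσc
  · rintro ⟨g, hgb, hgv, hgval, hgc⟩
    choose σ hσ using costgcc_choice g hgb hgv
    obtain ⟨h1, h2⟩ := costgcc_aux lb ub cost g hgb hgv hgval σ hσ
    exact ⟨σ, h1, by rw [h2]; exact hgc⟩
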